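/- For 0 < |z| < 1 and integer L ≥ 1, the tail sum T(z) = ∑_{ℓ=L}^∞ z^ℓ / √ℓ satisfies T(z) = z^L/(√L (1 - z)) · (1 + E) with |E| ≤ C/(L(1-|z|)) for some absolute constant C; in particular ∑_{ℓ=L}^∞ z^ℓ/√ℓ = z^L/(√L(1-z)) + O(z^L / (L^{3/2} (1-z)²)) as L → ∞ for fixed z with |z| ≤ 1, z ≠ 1. -/

import Mathlib

set_option maxHeartbeats 1000000

lemma sqrt_inv_diff {x : ℝ} (hx : 1 ≤ x) :
    (Real.sqrt x)⁻¹ - (Real.sqrt (x+1))⁻¹ ≤ 1 / (2 * x * Real.sqrt x) := by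
  have hx0 : (0:ℝ) < x := lt_of_lt_of_le one_pos hx
  set u := Real.sqrt x with hu
  set v := Real.sqrt (x+1) with hv
  have hu2 : u^2 = x := Real.sq_sqrt hx0.le
  have hv2 : v^2 = x+1 := Real.sq_sqrt (by linarith)
  have hu1 : (1:ℝ) ≤ u := by
    rw [hu, show (1:ℝ) = Real.sqrt 1 by simp]; exact Real.sqrt_le_sqrt hx
  have huv : u ≤ v := Real.sqrt_le_sqrt (by linarith)
  have hu0 : (0:ℝ) < u := lt_of_lt_of_le one_pos hu1
  have hv0 : (0:ℝ) < v := lt_of_lt_of_le hu0 huv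
  have h1 : (v - u) * (v + u) = 1 := by nlinarith [hu2, hv2]
  rw [inv_sub_inv hu0.ne' hv0.ne', div_le_div_iff₀ (by positivity) (by positivity)]
  nlinarith [h1, mul_le_mul_of_nonneg_left huv hx0.le, mul_pos hu0 hv0,
    mul_pos hx0 hu0, mul_pos hv0 (add_pos hv0 hu0)]

/-- leading-order tail-end asymptotics: there is an absolute constant `C`
such that for `0 < |z| < 1` and `L ≥ 1`,
`∑_{ℓ=L}^∞ z^ℓ/√ℓ = z^L/(√L (1-z)) (1 + E)` with `|E| ≤ C/(L(1-|z|))`. -/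
theorem stmt_14 :
    ∃ C : ℝ, 0 < C ∧ ∀ (z : ℂ) (L : ℕ), 0 < ‖z‖ → ‖z‖ < 1 → 1 ≤ L →
      ∃ E : ℂ,
        (∑' ℓ : ℕ, z ^ (L + ℓ) / (Real.sqrt (L + ℓ) : ℂ))
          = z ^ L / ((Real.sqrt L : ℂ) * (1 - z)) * (1 + E) ∧
        ‖E‖ ≤ C / (L * (1 - ‖z‖)) := by
  refine ⟨1, one_pos, ?_⟩
  intro z L hz0 hz1 hL
  have hL1 : (1:ℝ) ≤ (L:ℝ) := by exact_mod_cast hL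
  have hLpos : (0:ℝ) < L := lt_of_lt_of_le one_pos hL1
  set s : ℕ → ℝ := fun ℓ => Real.sqrt ((L:ℝ) + ℓ) with hs
  have hcast : ∀ ℓ : ℕ, (1:ℝ) ≤ (L:ℝ) + ℓ := by
    intro ℓ; have : (0:ℝ) ≤ (ℓ:ℝ) := Nat.cast_nonneg ℓ; linarith
  have hs1 : ∀ ℓ, (1:ℝ) ≤ s ℓ := by
    intro ℓ
    rw [hs, show (1:ℝ) = Real.sqrt 1 by simp]
    exact Real.sqrt_le_sqrt (hcast ℓ)
  have hs0 : ∀ ℓ, (0:ℝ) < s ℓ := fun ℓ => lt_of_lt_of_le one_pos (hs1 ℓ)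
  have hsmono : ∀ ℓ : ℕ, s ℓ ≤ s (ℓ+1) := by
    intro ℓ
    apply Real.sqrt_le_sqrt
    push_cast; linarith
  have hinvmono : ∀ ℓ : ℕ, (s (ℓ+1))⁻¹ ≤ (s ℓ)⁻¹ := by
    intro ℓ
    exact inv_anti₀ (hs0 ℓ) (hsmono ℓ)
  have hgeo : Summable (fun ℓ : ℕ => ‖z‖ ^ ℓ) :=
    summable_geometric_of_lt_one (norm_nonneg z) hz1
  have hA : Summable (fun ℓ : ℕ => z ^ ℓ / (s ℓ : ℂ)) := by
    refine Summable.of_norm_bounded hgeo fun ℓ => ?_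
    rw [norm_div, norm_pow]
    rw [show ‖((s ℓ : ℝ) : ℂ)‖ = s ℓ by
      rw [Complex.norm_real, Real.norm_of_nonneg (hs0 ℓ).le]]
    calc ‖z‖ ^ ℓ / s ℓ ≤ ‖z‖ ^ ℓ / 1 :=
          div_le_div_of_nonneg_left (by positivity) one_pos (hs1 ℓ)
      _ = ‖z‖ ^ ℓ := div_one _
  have hB : Summable (fun ℓ : ℕ => z ^ (ℓ+1) / (s (ℓ+1) : ℂ)) :=
    (summable_nat_add_iff 1).2 hA
  have hC : Summable (fun ℓ : ℕ => z ^ (ℓ+1) / (s ℓ : ℂ)) := by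
    refine (hA.mul_left z).congr fun ℓ => ?_
    rw [pow_succ]; ring
  set S : ℂ := ∑' ℓ : ℕ, z ^ ℓ / (s ℓ : ℂ) with hSdef
  have hsL : s 0 = Real.sqrt L := by simp [hs]
  have hsLC : ((Real.sqrt L : ℝ) : ℂ) ≠ 0 := by
    simp only [ne_eq, Complex.ofReal_eq_zero]
    positivity
  have hz1' : (1 : ℂ) - z ≠ 0 := by
    intro h
    have : z = 1 := by linear_combination -h
    rw [this] at hz1; simp at hz1
  set E : ℂ := ((Real.sqrt L : ℝ) : ℂ) * (1 - z) * S - 1 with hEdef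
  refine ⟨E, ?_, ?_⟩
  · have hT : (∑' ℓ : ℕ, z ^ (L + ℓ) / (Real.sqrt ((L:ℝ) + ℓ) : ℂ)) = z ^ L * S := by
      rw [hSdef, ← tsum_mul_left]
      exact tsum_congr fun ℓ => by rw [pow_add]; ring
    rw [hT, hEdef]
    field_simp
    ring
  · have hzS : z * S = ∑' ℓ : ℕ, z ^ (ℓ+1) / (s ℓ : ℂ) := by
      rw [hSdef, ← tsum_mul_left]
      exact tsum_congr fun ℓ => by rw [pow_succ]; ring
    have hSsplit : (∑' ℓ : ℕ, z ^ (ℓ+1) / (s (ℓ+1) : ℂ)) = S - ((Real.sqrt L : ℝ) : ℂ)⁻¹ := by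
      rw [hSdef, Summable.tsum_eq_zero_add hA]
      simp [hsL]
    have hE2 : E = ((Real.sqrt L : ℝ) : ℂ) *
        ∑' ℓ : ℕ, (z ^ (ℓ+1) / (s (ℓ+1) : ℂ) - z ^ (ℓ+1) / (s ℓ : ℂ)) := by
      rw [Summable.tsum_sub hB hC, ← hzS, hSsplit, hEdef]
      field_simp
      ring
    have hbound : ∀ ℓ : ℕ, ‖z ^ (ℓ+1) / (s (ℓ+1) : ℂ) - z ^ (ℓ+1) / (s ℓ : ℂ)‖
        ≤ ‖z‖ ^ ℓ * (1 / (2 * L * Real.sqrt L)) := by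
      intro ℓ
      have h1 : z ^ (ℓ+1) / (s (ℓ+1) : ℂ) - z ^ (ℓ+1) / (s ℓ : ℂ)
          = z ^ (ℓ+1) * ((((s (ℓ+1))⁻¹ - (s ℓ)⁻¹ : ℝ)) : ℂ) := by
        push_cast; ring
      rw [h1, norm_mul, norm_pow, Complex.norm_real, Real.norm_eq_abs]
      have hd : |(s (ℓ+1))⁻¹ - (s ℓ)⁻¹| = (s ℓ)⁻¹ - (s (ℓ+1))⁻¹ := by
        rw [abs_sub_comm, abs_of_nonneg (by linarith [hinvmono ℓ])]
      rw [hd]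
      have hdiff : (s ℓ)⁻¹ - (s (ℓ+1))⁻¹ ≤ 1 / (2 * ((L:ℝ) + ℓ) * Real.sqrt ((L:ℝ) + ℓ)) := by
        have h := sqrt_inv_diff (hcast ℓ)
        have heq : s (ℓ+1) = Real.sqrt (((L:ℝ) + ℓ) + 1) := by
          show Real.sqrt ((L:ℝ) + ((ℓ:ℕ)+1 : ℕ)) = _
          push_cast; ring_nf
        have heq0 : s ℓ = Real.sqrt ((L:ℝ) + ℓ) := rfl
        rw [heq0, heq]
        exact h
      have hmono : 1 / (2 * ((L:ℝ) + ℓ) * Real.sqrt ((L:ℝ) + ℓ)) ≤ 1 / (2 * L * Real.sqrt L) := by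
        apply div_le_div_of_nonneg_left one_pos.le (by positivity)
        have h3 : Real.sqrt L ≤ Real.sqrt ((L:ℝ) + ℓ) :=
          Real.sqrt_le_sqrt (by linarith [Nat.cast_nonneg (α := ℝ) ℓ])
        have h4 : (L:ℝ) ≤ (L:ℝ) + ℓ := by linarith [Nat.cast_nonneg (α := ℝ) ℓ]
        have h5 : (0:ℝ) < Real.sqrt L := Real.sqrt_pos.2 hLpos
        nlinarith
      have hzpow : ‖z‖ ^ (ℓ+1) ≤ ‖z‖ ^ ℓ := by
        rw [pow_succ]
        nlinarith [pow_nonneg (norm_nonneg z) ℓ, norm_nonneg z]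
      calc ‖z‖ ^ (ℓ+1) * ((s ℓ)⁻¹ - (s (ℓ+1))⁻¹)
          ≤ ‖z‖ ^ ℓ * ((s ℓ)⁻¹ - (s (ℓ+1))⁻¹) :=
            mul_le_mul_of_nonneg_right hzpow (by linarith [hinvmono ℓ])
        _ ≤ ‖z‖ ^ ℓ * (1 / (2 * L * Real.sqrt L)) :=
            mul_le_mul_of_nonneg_left (le_trans hdiff hmono) (by positivity)
    have hsumg : Summable (fun ℓ : ℕ => ‖z‖ ^ ℓ * (1 / (2 * (L:ℝ) * Real.sqrt L))) :=
      hgeo.mul_right _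
    have hnorms : Summable (fun ℓ : ℕ =>
        ‖z ^ (ℓ+1) / (s (ℓ+1) : ℂ) - z ^ (ℓ+1) / (s ℓ : ℂ)‖) :=
      Summable.of_nonneg_of_le (fun _ => norm_nonneg _) hbound hsumg
    have hnormsum : ‖∑' ℓ : ℕ, (z ^ (ℓ+1) / (s (ℓ+1) : ℂ) - z ^ (ℓ+1) / (s ℓ : ℂ))‖
        ≤ (1 - ‖z‖)⁻¹ * (1 / (2 * L * Real.sqrt L)) := by
      calc ‖∑' ℓ : ℕ, (z ^ (ℓ+1) / (s (ℓ+1) : ℂ) - z ^ (ℓ+1) / (s ℓ : ℂ))‖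
          ≤ ∑' ℓ : ℕ, ‖z ^ (ℓ+1) / (s (ℓ+1) : ℂ) - z ^ (ℓ+1) / (s ℓ : ℂ)‖ :=
            norm_tsum_le_tsum_norm hnorms
        _ ≤ ∑' ℓ : ℕ, ‖z‖ ^ ℓ * (1 / (2 * (L:ℝ) * Real.sqrt L)) :=
            Summable.tsum_le_tsum hbound hnorms hsumg
        _ = (1 - ‖z‖)⁻¹ * (1 / (2 * L * Real.sqrt L)) := by
            rw [tsum_mul_right, tsum_geometric_of_lt_one (norm_nonneg z) hz1]
    have hEnorm : ‖E‖ ≤ Real.sqrt L * ((1 - ‖z‖)⁻¹ * (1 / (2 * L * Real.sqrt L))) := by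
      rw [hE2, norm_mul, Complex.norm_real, Real.norm_of_nonneg (Real.sqrt_nonneg _)]
      exact mul_le_mul_of_nonneg_left hnormsum (Real.sqrt_nonneg _)
    have hfinal : Real.sqrt L * ((1 - ‖z‖)⁻¹ * (1 / (2 * L * Real.sqrt L)))
        ≤ 1 / ((L:ℝ) * (1 - ‖z‖)) := by
      have h5 : (0:ℝ) < Real.sqrt L := Real.sqrt_pos.2 hLpos
      have h6 : (0:ℝ) < 1 - ‖z‖ := by linarith
      have hne : (2 * (L:ℝ) * Real.sqrt L) ≠ 0 := by positivity
      have hne2 : (2 * (L:ℝ) * (1 - ‖z‖)) ≠ 0 := by positivity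
      rw [show Real.sqrt L * ((1 - ‖z‖)⁻¹ * (1 / (2 * L * Real.sqrt L)))
          = 1 / (2 * L * (1 - ‖z‖)) by
        rw [inv_eq_one_div, one_div_mul_one_div, mul_one_div,
          div_eq_div_iff
            (ne_of_gt (mul_pos h6 (show (0:ℝ) < 2 * (L:ℝ) * Real.sqrt L by positivity)))
            (ne_of_gt (mul_pos (show (0:ℝ) < 2 * (L:ℝ) by positivity) h6))]
        ring]
      apply div_le_div_of_nonneg_left one_pos.le (by positivity)
      nlinarith
    calc ‖E‖ ≤ Real.sqrt L * ((1 - ‖z‖)⁻¹ * (1 / (2 * L * Real.sqrt L))) := hEnorm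
      _ ≤ 1 / ((L:ℝ) * (1 - ‖z‖)) := hfinal
      _ = 1 / ((L:ℝ) * (1 - ‖z‖)) := rfl
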